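/- In the scalar case d = 1: suppose Y = X ᵀβ(Ũ) a.s. with Ũ ~ U(0,1), E[X|Ũ] = E[X], and t ↦ xᵀβ(t) strictly increasing on (0,1) for x in the support of X; and suppose also Y = Xᵀβ̄(Ū) a.s. with Ū ~ U(0,1), E[X|Ū] = E[X], and t ↦ xᵀβ̄(t) strictly increasing. Then Ũ = Ū a.s. and Xᵀβ(Ũ) = Xᵀβ̄(Ū) a.s. -/

import Mathlib

open MeasureTheory Matrix Set

/-!
Let `U`, `V` be the two ranks and fix a level `u`. By monotonicity `{U ≤ u} = {Y ≤ Xᵀβ(u)}` and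
`{V ≤ u} = {Y ≤ Xᵀβ̄(u)}` a.s., so `(1{U ≤ u} - 1{V ≤ u}) · Xᵀ(β(u) - β̄(u))` is nonnegative, and it
vanishes only where the two events agree. Mean independence and the equality of the laws of `U`
and `V` give both `1{U ≤ u} · Xᵀ(β(u) - β̄(u))` and `1{V ≤ u} · Xᵀ(β(u) - β̄(u))` the expectation
`P(U ≤ u) · E[X]ᵀ(β(u) - β̄(u))`, so the nonnegative function has integral zero. Hence
`{U ≤ u} = {V ≤ u}` a.s. for every rational `u ∈ (0, 1)`, which forces `U = V` a.s.
-/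

/-- `E[X | U] = E[X]`, tested against bounded measurable functions of `U`. -/
def IsMeanIndep {Ω E : Type*} [MeasurableSpace Ω] [NormedAddCommGroup E] [NormedSpace ℝ E]
    (P : Measure Ω) (X : Ω → E) (U : Ω → ℝ) : Prop :=
  ∀ g : ℝ → ℝ, Measurable g → (∃ C, ∀ v, |g v| ≤ C) →
    ∫ ω, g (U ω) • X ω ∂P = (∫ ω, g (U ω) ∂P) • ∫ ω, X ω ∂P

lemma threshold_gap_nonneg (y a b : ℝ) :
    0 ≤ (if y ≤ a then a - b else 0) - (if y ≤ b then a - b else 0) := by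
  split_ifs <;> linarith

lemma le_iff_le_of_threshold_gap_eq_zero {y a b : ℝ}
    (h : (if y ≤ a then a - b else 0) - (if y ≤ b then a - b else 0) = 0) : y ≤ a ↔ y ≤ b := by
  split_ifs at h with ha hb hb <;> first | tauto | exact absurd ha (by linarith)

section

variable {Ω : Type*} [MeasurableSpace Ω] {P : Measure Ω}

lemma ae_le_iff_of_strictMonoOn {s : Set ℝ} (f : Ω → ℝ → ℝ) {U Y : Ω → ℝ}
    (hf : ∀ᵐ ω ∂P, StrictMonoOn (f ω) s) (hU : ∀ ω, U ω ∈ s) (hY : ∀ᵐ ω ∂P, Y ω = f ω (U ω))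
    {u : ℝ} (hu : u ∈ s) : ∀ᵐ ω ∂P, U ω ≤ u ↔ Y ω ≤ f ω u := by
  filter_upwards [hf, hY] with ω hfω hYω
  rw [hYω, hfω.le_iff_le (hU ω) hu]

theorem ae_mem_iff_of_setIntegral_sub_eq {A B : Set Ω} (hA : MeasurableSet A)
    (hB : MeasurableSet B) {Y T S : Ω → ℝ} (hint : Integrable (fun ω => T ω - S ω) P)
    (hAY : ∀ᵐ ω ∂P, ω ∈ A ↔ Y ω ≤ T ω) (hBY : ∀ᵐ ω ∂P, ω ∈ B ↔ Y ω ≤ S ω)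
    (heq : ∫ ω in A, (T ω - S ω) ∂P = ∫ ω in B, (T ω - S ω) ∂P) :
    ∀ᵐ ω ∂P, ω ∈ A ↔ ω ∈ B := by
  set F : Ω → ℝ := fun ω =>
    A.indicator (fun ω => T ω - S ω) ω - B.indicator (fun ω => T ω - S ω) ω
  have hF_eq : ∀ᵐ ω ∂P, F ω =
      (if Y ω ≤ T ω then T ω - S ω else 0) - (if Y ω ≤ S ω then T ω - S ω else 0) := by
    filter_upwards [hAY, hBY] with ω hAω hBω
    classical
    simp only [F, indicator_apply, hAω, hBω]
  have hF_int : Integrable F P := (hint.indicator hA).sub (hint.indicator hB)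
  have hF_nonneg : 0 ≤ᵐ[P] F := by
    filter_upwards [hF_eq] with ω hω
    exact hω ▸ threshold_gap_nonneg _ _ _
  have hF_zero : F =ᵐ[P] 0 := by
    refine (integral_eq_zero_iff_of_nonneg_ae hF_nonneg hF_int).1 ?_
    rw [integral_sub (hint.indicator hA) (hint.indicator hB), integral_indicator hA,
      integral_indicator hB, heq, sub_self]
  filter_upwards [hAY, hBY, hF_eq, hF_zero] with ω hAω hBω hFω hF0
  rw [hAω, hBω]
  exact le_iff_le_of_threshold_gap_eq_zero (hFω ▸ hF0)

lemma IsMeanIndep.setIntegral_preimage {E : Type*} [NormedAddCommGroup E] [NormedSpace ℝ E]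
    {X : Ω → E} {U : Ω → ℝ} (h : IsMeanIndep P X U) (hU : Measurable U) {s : Set ℝ}
    (hs : MeasurableSet s) :
    ∫ ω in U ⁻¹' s, X ω ∂P = P.real (U ⁻¹' s) • ∫ ω, X ω ∂P := by
  have hg_bdd : ∀ v, |s.indicator (1 : ℝ → ℝ) v| ≤ 1 := fun v => by
    by_cases hv : v ∈ s <;> simp [hv]
  have hind : ∀ ω, (U ⁻¹' s).indicator X ω = s.indicator (1 : ℝ → ℝ) (U ω) • X ω := fun ω => by
    by_cases hω : U ω ∈ s <;> simp [hω]
  have hind_one : ∀ ω, s.indicator (1 : ℝ → ℝ) (U ω) = (U ⁻¹' s).indicator 1 ω := fun ω => by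
    by_cases hω : U ω ∈ s <;> simp [hω]
  rw [← integral_indicator (hU hs), funext hind, h _ (measurable_one.indicator hs) ⟨1, hg_bdd⟩,
    funext hind_one, integral_indicator_one (hU hs)]

lemma integral_dotProduct_const {ι : Type*} [Fintype ι] {X : Ω → ι → ℝ} (hX : Integrable X P)
    (v : ι → ℝ) : ∫ ω, X ω ⬝ᵥ v ∂P = (∫ ω, X ω ∂P) ⬝ᵥ v := by
  simp only [dotProduct]
  rw [integral_finsetSum _ fun i _ => (hX.eval i).mul_const _]
  simp only [integral_mul_const, eval_integral hX.eval]

lemma MeasureTheory.Integrable.dotProduct_const {ι : Type*} [Fintype ι] {X : Ω → ι → ℝ}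
    (hX : Integrable X P) (v : ι → ℝ) : Integrable (fun ω => X ω ⬝ᵥ v) P :=
  integrable_finsetSum _ fun i _ => (hX.eval i).mul_const _

lemma ae_eq_of_forall_rat_le_iff {s : Set ℝ} [s.OrdConnected] {U V : Ω → ℝ} (hU : ∀ ω, U ω ∈ s)
    (hV : ∀ ω, V ω ∈ s) (h : ∀ q : ℚ, (q : ℝ) ∈ s → ∀ᵐ ω ∂P, U ω ≤ q ↔ V ω ≤ q) :
    U =ᵐ[P] V := by
  have h_all : ∀ᵐ ω ∂P, ∀ q : ℚ, (q : ℝ) ∈ s → (U ω ≤ q ↔ V ω ≤ q) := by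
    refine ae_all_iff.2 fun q => ?_
    by_cases hq : (q : ℝ) ∈ s
    · exact (h q hq).mono fun ω hω _ => hω
    · exact .of_forall fun ω hq' => absurd hq' hq
  filter_upwards [h_all] with ω hω
  by_contra hne
  rcases lt_or_gt_of_ne hne with hlt | hlt
  · obtain ⟨q, hUq, hqV⟩ := exists_rat_btwn hlt
    have hq : (q : ℝ) ∈ s := Set.OrdConnected.out' (hU ω) (hV ω) ⟨hUq.le, hqV.le⟩
    exact (hω q hq).1 hUq.le |>.not_gt hqV
  · obtain ⟨q, hVq, hqU⟩ := exists_rat_btwn hlt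
    have hq : (q : ℝ) ∈ s := Set.OrdConnected.out' (hV ω) (hU ω) ⟨hVq.le, hqU.le⟩
    exact (hω q hq).2 hVq.le |>.not_gt hqU

theorem ae_le_iff_le_of_strictMonoOn_dotProduct {p : ℕ} {X : Ω → Fin p → ℝ}
    (hX : Integrable X P) {Y U V : Ω → ℝ} {β γ : ℝ → Fin p → ℝ} {s : Set ℝ}
    (hU : Measurable U) (hV : Measurable V) (hlaw : P.map U = P.map V)
    (hUs : ∀ ω, U ω ∈ s) (hVs : ∀ ω, V ω ∈ s)
    (hβ : ∀ᵐ ω ∂P, StrictMonoOn (fun t => X ω ⬝ᵥ β t) s)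
    (hγ : ∀ᵐ ω ∂P, StrictMonoOn (fun t => X ω ⬝ᵥ γ t) s)
    (hYU : ∀ᵐ ω ∂P, Y ω = X ω ⬝ᵥ β (U ω)) (hYV : ∀ᵐ ω ∂P, Y ω = X ω ⬝ᵥ γ (V ω))
    (hXU : IsMeanIndep P X U) (hXV : IsMeanIndep P X V) {u : ℝ} (hu : u ∈ s) :
    ∀ᵐ ω ∂P, U ω ≤ u ↔ V ω ≤ u := by
  have hmass : ∀ W : Ω → ℝ, Measurable W → IsMeanIndep P X W →
      ∫ ω in W ⁻¹' Iic u, (X ω ⬝ᵥ β u - X ω ⬝ᵥ γ u) ∂P =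
        P.real (W ⁻¹' Iic u) * ((∫ ω, X ω ∂P) ⬝ᵥ (β u - γ u)) := by
    intro W hW hXW
    simp_rw [← dotProduct_sub]
    rw [integral_dotProduct_const hX.integrableOn, hXW.setIntegral_preimage hW measurableSet_Iic,
      smul_dotProduct, smul_eq_mul]
  refine ae_mem_iff_of_setIntegral_sub_eq (A := U ⁻¹' Iic u) (B := V ⁻¹' Iic u)
    (hU measurableSet_Iic) (hV measurableSet_Iic)
    ((hX.dotProduct_const _).sub (hX.dotProduct_const _))
    (ae_le_iff_of_strictMonoOn _ hβ hUs hYU hu) (ae_le_iff_of_strictMonoOn _ hγ hVs hYV hu) ?_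
  rw [hmass U hU hXU, hmass V hV hXV, ← map_measureReal_apply hU measurableSet_Iic,
    ← map_measureReal_apply hV measurableSet_Iic, hlaw]

end

/-- Theorem 3.3(ii), scalar case: the quasi-linear representation of a scalar outcome
via a uniform rank, strictly increasing in the rank and mean independent of the
regressors, is almost surely unique. -/
theorem stmt12 {p : ℕ} {Ω : Type*} [MeasurableSpace Ω] (P : Measure Ω)
    [IsProbabilityMeasure P]
    (β βb : ℝ → (Fin p → ℝ)) (X : Ω → (Fin p → ℝ)) (Y : Ω → ℝ) (Ut Ub : Ω → ℝ)
    (hXmeas : Measurable X) (hUtmeas : Measurable Ut) (hUbmeas : Measurable Ub)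
    (hX2 : ∀ i, Integrable (fun ω => (X ω i) ^ 2) P)
    (hUtlaw : Measure.map Ut P = volume.restrict (Set.Ioo (0:ℝ) 1))
    (hUblaw : Measure.map Ub P = volume.restrict (Set.Ioo (0:ℝ) 1))
    (hUtmem : ∀ ω, Ut ω ∈ Set.Ioo (0:ℝ) 1) (hUbmem : ∀ ω, Ub ω ∈ Set.Ioo (0:ℝ) 1)
    (hmono : ∀ᵐ ω ∂P, StrictMonoOn (fun t => X ω ⬝ᵥ β t) (Set.Ioo (0:ℝ) 1))
    (hmonob : ∀ᵐ ω ∂P, StrictMonoOn (fun t => X ω ⬝ᵥ βb t) (Set.Ioo (0:ℝ) 1))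
    (hYrep : ∀ᵐ ω ∂P, Y ω = X ω ⬝ᵥ β (Ut ω))
    (hYrepb : ∀ᵐ ω ∂P, Y ω = X ω ⬝ᵥ βb (Ub ω))
    (hMIUt : ∀ g : ℝ → ℝ, Measurable g → (∃ C, ∀ v, |g v| ≤ C) →
      ∫ ω, g (Ut ω) • X ω ∂P = (∫ ω, g (Ut ω) ∂P) • ∫ ω, X ω ∂P)
    (hMIUb : ∀ g : ℝ → ℝ, Measurable g → (∃ C, ∀ v, |g v| ≤ C) →
      ∫ ω, g (Ub ω) • X ω ∂P = (∫ ω, g (Ub ω) ∂P) • ∫ ω, X ω ∂P) :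
    (∀ᵐ ω ∂P, Ut ω = Ub ω) ∧
    (∀ᵐ ω ∂P, X ω ⬝ᵥ β (Ut ω) = X ω ⬝ᵥ βb (Ub ω)) := by
  have hX : Integrable X P := integrable_pi_iff.2 fun i =>
    ((memLp_two_iff_integrable_sq ((measurable_pi_apply i).comp hXmeas).aestronglyMeasurable).2
      (hX2 i)).integrable one_le_two
  have hU : Ut =ᵐ[P] Ub := ae_eq_of_forall_rat_le_iff hUtmem hUbmem fun _ hq =>
    ae_le_iff_le_of_strictMonoOn_dotProduct hX hUtmeas hUbmeas (hUtlaw.trans hUblaw.symm)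
      hUtmem hUbmem hmono hmonob hYrep hYrepb hMIUt hMIUb hq
  refine ⟨hU, ?_⟩
  filter_upwards [hYrep, hYrepb] with ω hYt hYb
  rw [← hYt, ← hYb]
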